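/- Let 0 < p_1 < p_2 < p_3 < 1/2 and set τ_i = τ(p_i,·) for i = 1,2,3. Then the function q ↦ (τ_1(q) − τ_2(q))/(τ_2(q) − τ_3(q)) is well defined (the denominator is nonzero) and strictly decreasing on (1,+∞). -/

import Mathlib

/-!
Put `p = sigmoid x`, so that `p < 1/2` iff `x < 0`. Then
`log (p ^ q + (1 - p) ^ q) = G q x := softplus (q x) - q softplus x`, and the claim is that the ratio
of the increments of `G q` over `[x₁, x₂]` and `[x₂, x₃]` decreases in `q`. By Cauchy's mean value
theorem in `x`, it suffices that the ratio of `x`-derivatives `∂ₓG b / ∂ₓG a` increases on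
`x < 0` for `1 < a < b`, where `∂ₓG q x = q (sigmoid (q x) - sigmoid x)`. A second application of
Cauchy's theorem, now in the scaling parameter, reduces this to the monotonicity of
`t ↦ sigmoid' (t y) / sigmoid' (t x)` for `x < y < 0`. Since `sigmoid' u = 1 / (4 cosh² (u / 2))`,
that is the inequality `cosh a cosh b < cosh c cosh d` for `|a + b| < |c + d|`, `|a - b| ≤ |c - d|`,
which follows from `2 cosh a cosh b = cosh (a + b) + cosh (a - b)`.
-/

open MeasureTheory Filter Set

noncomputable section

/-- `τ(p,q) = log(p^q + (1-p)^q) / log 2`, the `L^q`-spectrum of the homogeneous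
Bernoulli product with weight `p`. -/
def taup (p q : ℝ) : ℝ :=
  Real.log (p ^ q + (1 - p) ^ q) / Real.log 2

open Real

theorem exists_sub_div_sub_eq_deriv_div {f g f' g' : ℝ → ℝ} {a b : ℝ} (hab : a < b)
    (hf : ∀ x ∈ Icc a b, HasDerivAt f (f' x) x) (hg : ∀ x ∈ Icc a b, HasDerivAt g (g' x) x)
    (hg' : ∀ x ∈ Ioo a b, g' x ≠ 0) :
    ∃ ξ ∈ Ioo a b, (f b - f a) / (g b - g a) = f' ξ / g' ξ := by
  have hfc : ContinuousOn f (Icc a b) := fun x hx => (hf x hx).continuousAt.continuousWithinAt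
  have hgc : ContinuousOn g (Icc a b) := fun x hx => (hg x hx).continuousAt.continuousWithinAt
  obtain ⟨ζ, hζ, hζeq⟩ := exists_hasDerivAt_eq_slope g g' hab hgc
    (fun x hx => hg x (Ioo_subset_Icc_self hx))
  have hgab : g b - g a ≠ 0 := by
    intro h
    rw [h, zero_div] at hζeq
    exact hg' ζ hζ hζeq
  obtain ⟨ξ, hξ, hξeq⟩ := exists_ratio_hasDerivAt_eq_ratio_slope f f' hab hfc
    (fun x hx => hf x (Ioo_subset_Icc_self hx)) g g' hgc
    (fun x hx => hg x (Ioo_subset_Icc_self hx))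
  exact ⟨ξ, hξ, (div_eq_div_iff hgab (hg' ξ hξ)).2 (by linear_combination -hξeq)⟩

theorem sub_div_sub_lt_sub_div_sub_of_strictMonoOn {f g f' g' : ℝ → ℝ} {a b c : ℝ}
    (hab : a < b) (hbc : b < c)
    (hf : ∀ x ∈ Icc a c, HasDerivAt f (f' x) x) (hg : ∀ x ∈ Icc a c, HasDerivAt g (g' x) x)
    (hg' : ∀ x ∈ Ioo a c, g' x ≠ 0) (hmono : StrictMonoOn (fun x => f' x / g' x) (Ioo a c)) :
    (f b - f a) / (g b - g a) < (f c - f b) / (g c - g b) := by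
  have hab' : Icc a b ⊆ Icc a c := Icc_subset_Icc_right hbc.le
  have hbc' : Icc b c ⊆ Icc a c := Icc_subset_Icc_left hab.le
  obtain ⟨ξ, hξ, hξeq⟩ := exists_sub_div_sub_eq_deriv_div hab
    (fun x hx => hf x (hab' hx)) (fun x hx => hg x (hab' hx))
    (fun x hx => hg' x (Ioo_subset_Ioo_right hbc.le hx))
  obtain ⟨η, hη, hηeq⟩ := exists_sub_div_sub_eq_deriv_div hbc
    (fun x hx => hf x (hbc' hx)) (fun x hx => hg x (hbc' hx))
    (fun x hx => hg' x (Ioo_subset_Ioo_left hab.le hx))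
  rw [hξeq, hηeq]
  exact hmono ⟨hξ.1, hξ.2.trans hbc⟩ ⟨hab.trans hη.1, hη.2⟩ (hξ.2.trans hη.1)

theorem cosh_mul_cosh_lt_cosh_mul_cosh {a b c d : ℝ} (hadd : |a + b| < |c + d|)
    (hsub : |a - b| ≤ |c - d|) : cosh a * cosh b < cosh c * cosh d := by
  have h₁ : cosh (a + b) < cosh (c + d) := cosh_lt_cosh.2 hadd
  have h₂ : cosh (a - b) ≤ cosh (c - d) := cosh_le_cosh.2 hsub
  rw [cosh_add, cosh_add] at h₁
  rw [cosh_sub, cosh_sub] at h₂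
  linarith

theorem strictMonoOn_cosh_mul_div_cosh_mul {x y : ℝ} (hxy : x < y) (hy : y < 0) :
    StrictMonoOn (fun t => cosh (t * x) / cosh (t * y)) (Ioi 0) := by
  intro t ht s hs hts
  simp only [mem_Ioi] at ht hs
  rw [div_lt_div_iff₀ (cosh_pos _) (cosh_pos _)]
  apply cosh_mul_cosh_lt_cosh_mul_cosh
  · rw [abs_of_neg (by nlinarith), abs_of_neg (by nlinarith)]
    nlinarith
  · rw [abs_of_neg (a := s * x - t * y) (by nlinarith), abs_le]
    constructor <;> nlinarith

theorem sigmoid_eq_exp_div (x : ℝ) : sigmoid x = exp x / (1 + exp x) := by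
  rw [sigmoid_def, exp_neg]
  field_simp
  ring

theorem one_sub_sigmoid (x : ℝ) : 1 - sigmoid x = (1 + exp x)⁻¹ := by
  rw [sigmoid_eq_exp_div]
  field_simp
  ring

theorem sigmoid_mul_one_sub_sigmoid (x : ℝ) :
    sigmoid x * (1 - sigmoid x) = (4 * cosh (x / 2) ^ 2)⁻¹ := by
  have hx : exp x = exp (x / 2) ^ 2 := by rw [← exp_nat_mul]; ring_nf
  rw [one_sub_sigmoid, sigmoid_eq_exp_div, cosh_eq, exp_neg, hx]
  field_simp
  ring

theorem hasDerivAt_sigmoid_comp_mul_const (x t : ℝ) :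
    HasDerivAt (fun t => sigmoid (t * x)) ((4 * cosh (t * x / 2) ^ 2)⁻¹ * x) t := by
  rw [← sigmoid_mul_one_sub_sigmoid]
  have := (hasDerivAt_sigmoid (t * x)).comp t (hasDerivAt_mul_const x)
  exact this

theorem strictMonoOn_sigmoid_deriv_ratio {x y : ℝ} (hxy : x < y) (hy : y < 0) :
    StrictMonoOn (fun t => (4 * cosh (t * y / 2) ^ 2)⁻¹ * y / ((4 * cosh (t * x / 2) ^ 2)⁻¹ * x))
      (Ioi 0) := by
  have hx : x < 0 := hxy.trans hy
  have hcosh := strictMonoOn_cosh_mul_div_cosh_mul (x := x / 2) (y := y / 2) (by linarith)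
    (by linarith)
  have hform : ∀ t, (4 * cosh (t * y / 2) ^ 2)⁻¹ * y / ((4 * cosh (t * x / 2) ^ 2)⁻¹ * x)
      = y / x * (cosh (t * (x / 2)) / cosh (t * (y / 2))) ^ 2 := by
    intro t
    have := cosh_pos (t * (x / 2))
    have := cosh_pos (t * (y / 2))
    simp only [mul_div_assoc]
    field_simp
  intro t ht s hs hts
  simp only [hform]
  have hyx : 0 < y / x := div_pos_of_neg_of_neg hy hx
  have hpos : 0 < cosh (t * (x / 2)) / cosh (t * (y / 2)) := div_pos (cosh_pos _) (cosh_pos _)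
  exact mul_lt_mul_of_pos_left (pow_lt_pow_left₀ (hcosh ht hs hts) hpos.le two_ne_zero) hyx

theorem strictMonoOn_sigmoid_sub_div_sigmoid_sub {a b : ℝ} (ha : 1 < a) (hab : a < b) :
    StrictMonoOn (fun x => (sigmoid (b * x) - sigmoid x) / (sigmoid (a * x) - sigmoid x))
      (Iio 0) := by
  intro x hx y hy hxy
  simp only [mem_Iio] at hx hy
  have key := sub_div_sub_lt_sub_div_sub_of_strictMonoOn
    (f := fun t => sigmoid (t * y)) (g := fun t => sigmoid (t * x)) ha hab
    (fun t _ => hasDerivAt_sigmoid_comp_mul_const y t)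
    (fun t _ => hasDerivAt_sigmoid_comp_mul_const x t)
    (fun t _ => mul_ne_zero (by positivity) hx.ne)
    ((strictMonoOn_sigmoid_deriv_ratio hxy hy).mono fun t ht => one_pos.trans ht.1)
  have hlt : ∀ {s t z : ℝ}, z < 0 → s < t → sigmoid (t * z) < sigmoid (s * z) :=
    fun hz hst => sigmoid_lt (mul_lt_mul_of_neg_right hst hz)
  have hx₁ := hlt hx ha
  have hx₂ := hlt hx hab
  have hy₁ := hlt hy ha
  have hy₂ := hlt hy hab
  simp only [one_mul] at key hx₁ hy₁
  rw [← neg_div_neg_eq (sigmoid (a * y) - _), ← neg_div_neg_eq (sigmoid (b * y) - _),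
    div_lt_div_iff₀ (by linarith) (by linarith)] at key
  show _ / _ < _ / _
  rw [← neg_div_neg_eq, ← neg_div_neg_eq (sigmoid (b * y) - _),
    div_lt_div_iff₀ (by linarith) (by linarith)]
  linear_combination key

def softplus (x : ℝ) : ℝ := log (1 + exp x)

def softplusGap (q x : ℝ) : ℝ := softplus (q * x) - q * softplus x

theorem hasDerivAt_softplus (x : ℝ) : HasDerivAt softplus (sigmoid x) x := by
  rw [sigmoid_eq_exp_div]
  exact ((hasDerivAt_exp x).const_add 1).log (by positivity)

theorem hasDerivAt_softplusGap (q x : ℝ) :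
    HasDerivAt (softplusGap q) (q * (sigmoid (q * x) - sigmoid x)) x := by
  have h : HasDerivAt (fun x => softplus (q * x) - q * softplus x)
      (sigmoid (q * x) * (q * 1) - q * sigmoid x) x :=
    ((hasDerivAt_softplus (q * x)).comp x ((hasDerivAt_id x).const_mul q)).sub
      ((hasDerivAt_softplus x).const_mul q)
  exact h.congr_deriv (by ring)

theorem softplusGap_strictAntiOn {q : ℝ} (hq : 1 < q) : StrictAntiOn (softplusGap q) (Iic 0) := by
  refine strictAntiOn_of_deriv_neg (convex_Iic 0)
    (fun x _ => (hasDerivAt_softplusGap q x).continuousAt.continuousWithinAt) fun x hx => ?_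
  rw [interior_Iic, mem_Iio] at hx
  rw [(hasDerivAt_softplusGap q x).deriv]
  have : sigmoid (q * x) < sigmoid x := sigmoid_lt (by nlinarith)
  nlinarith

theorem taup_sigmoid (x q : ℝ) : taup (sigmoid x) q = softplusGap q x / log 2 := by
  have hpos : 0 < 1 + exp x := by positivity
  have hsum : sigmoid x ^ q + (1 - sigmoid x) ^ q = (1 + exp (q * x)) / (1 + exp x) ^ q := by
    rw [one_sub_sigmoid, sigmoid_eq_exp_div, div_rpow (exp_pos x).le hpos.le, inv_rpow hpos.le,
      ← exp_mul, mul_comm x q]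
    field_simp
    ring
  rw [taup, hsum, log_div (by positivity) (by positivity), log_rpow hpos]
  rfl

theorem strictMonoOn_softplusGap_deriv_ratio {a b : ℝ} (ha : 1 < a) (hab : a < b) :
    StrictMonoOn (fun x => b * (sigmoid (b * x) - sigmoid x) / (a * (sigmoid (a * x) - sigmoid x)))
      (Iio 0) := by
  intro x hx y hy hxy
  simp only [mul_div_mul_comm]
  exact mul_lt_mul_of_pos_left (strictMonoOn_sigmoid_sub_div_sigmoid_sub ha hab hx hy hxy)
    (div_pos (by linarith) (by linarith))

theorem strictAntiOn_softplusGap_sub_div_sub {x₁ x₂ x₃ : ℝ} (h₁₂ : x₁ < x₂) (h₂₃ : x₂ < x₃)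
    (h₃ : x₃ < 0) :
    StrictAntiOn (fun q => (softplusGap q x₁ - softplusGap q x₂) /
      (softplusGap q x₂ - softplusGap q x₃)) (Ioi 1) := by
  intro a ha b hb hab
  simp only [mem_Ioi] at ha hb
  have hgap : ∀ {q u v : ℝ}, 1 < q → u < v → v ≤ 0 → 0 < softplusGap q u - softplusGap q v :=
    fun hq huv hv => sub_pos.2 (softplusGap_strictAntiOn hq (huv.le.trans hv) hv huv)
  have key := sub_div_sub_lt_sub_div_sub_of_strictMonoOn
    (f := softplusGap b) (g := softplusGap a) h₁₂ h₂₃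
    (fun x _ => hasDerivAt_softplusGap b x) (fun x _ => hasDerivAt_softplusGap a x)
    (fun x hx => mul_ne_zero (by linarith)
      (sub_neg.2 (sigmoid_lt (by nlinarith [hx.2.trans h₃]))).ne)
    ((strictMonoOn_softplusGap_deriv_ratio ha hab).mono fun x hx => hx.2.trans h₃)
  rw [← neg_div_neg_eq, neg_sub, neg_sub, ← neg_div_neg_eq (softplusGap b x₃ - _), neg_sub,
    neg_sub, div_lt_div_iff₀ (hgap ha h₁₂ (h₂₃.trans h₃).le) (hgap ha h₂₃ h₃.le)] at key
  show _ / _ < _ / _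
  rw [div_lt_div_iff₀ (hgap hb h₂₃ h₃.le) (hgap ha h₂₃ h₃.le)]
  linear_combination key

/-- Lemma 5.2. Let `0 < p₁ < p₂ < p₃ < 1/2` and `τᵢ = τ(pᵢ,·)`. Then
`q ↦ (τ₁(q) - τ₂(q))/(τ₂(q) - τ₃(q))` is well defined (nonvanishing denominator) and
strictly decreasing on `(1,∞)`. -/
theorem statement16
    (p₁ p₂ p₃ : ℝ)
    (hp₁ : 0 < p₁) (hp₁₂ : p₁ < p₂) (hp₂₃ : p₂ < p₃) (hp₃ : p₃ < 1 / 2) :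
    (∀ q : ℝ, 1 < q → taup p₂ q - taup p₃ q ≠ 0)
      ∧ StrictAntiOn
          (fun q : ℝ => (taup p₁ q - taup p₂ q) / (taup p₂ q - taup p₃ q))
          (Set.Ioi 1) := by
  have hrange : ∀ {p : ℝ}, 0 < p → p < 1 / 2 → p ∈ range sigmoid := fun h₀ h₁ => by
    rw [range_sigmoid]
    exact ⟨h₀, by linarith⟩
  obtain ⟨x₁, rfl⟩ := hrange hp₁ (by linarith)
  obtain ⟨x₂, rfl⟩ := hrange (hp₁.trans hp₁₂) (by linarith)
  obtain ⟨x₃, rfl⟩ := hrange (hp₁.trans (hp₁₂.trans hp₂₃)) hp₃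
  have h₁₂ : x₁ < x₂ := sigmoid_lt_iff.1 hp₁₂
  have h₂₃ : x₂ < x₃ := sigmoid_lt_iff.1 hp₂₃
  have h₃ : x₃ < 0 := sigmoid_lt_iff.1 (by rwa [sigmoid_zero, ← one_div])
  have hlog2 : log 2 ≠ 0 := (log_pos one_lt_two).ne'
  simp only [taup_sigmoid, div_sub_div_same, div_div_div_cancel_right₀ hlog2]
  refine ⟨fun q hq => div_ne_zero (sub_pos.2 ?_).ne' hlog2,
    strictAntiOn_softplusGap_sub_div_sub h₁₂ h₂₃ h₃⟩
  exact softplusGap_strictAntiOn hq (h₂₃.trans h₃).le h₃.le h₂₃
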